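/- Let f : ℝ^n × ℝ^m → ℝ be continuous with x ↦ f(x, ξ̃) convex for every ξ̃ ∈ Ξ, let X ⊆ ℝ^n be closed and convex, let Ξ ⊆ ℝ^m be closed and convex, let ξ̂¹, …, ξ̂ᴺ ∈ Ξ and ε > 0. Then inf_{x ∈ X} sup_{Q ∈ B_ε(P̂_N)} E_Q[f(x, ξ)] = inf_{λ ≥ 0, x ∈ X} { λε² + (1/N) Σ_{k=1}^N sup_{ξ ∈ Ξ} ( f(x, ξ) − λ‖ξ − ξ̂ᵏ‖² ) }, where both sides are taken in the extended reals. -/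

import Mathlib

open scoped BigOperators ENNReal
open MeasureTheory

noncomputable section

/-- `k`-dimensional Euclidean space. -/
abbrev Vec (k : ℕ) := EuclideanSpace ℝ (Fin k)

/-- Expectation E_Q[φ] of a real-valued function, taken in the extended reals
(difference of the lower integrals of the positive and negative parts). -/
def expectEReal {m : ℕ} (Q : Measure (Vec m)) (φ : Vec m → ℝ) : EReal :=
  ((∫⁻ ξ, ENNReal.ofReal (φ ξ) ∂Q : ℝ≥0∞) : EReal)
    - ((∫⁻ ξ, ENNReal.ofReal (-φ ξ) ∂Q : ℝ≥0∞) : EReal)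

/-- M(Ξ): Borel probability measures supported on Ξ with finite second moment. -/
def MXi {m : ℕ} (Ξ : Set (Vec m)) : Set (Measure (Vec m)) :=
  {Q | IsProbabilityMeasure Q ∧ Q Ξᶜ = 0 ∧ (∫⁻ ξ, ENNReal.ofReal (‖ξ‖ ^ 2) ∂Q) < ⊤}

/-- Squared 2-Wasserstein distance: the infimum, over couplings Π of (Q₁, Q₂), of the
transport cost ∫ ‖ξ₁ − ξ₂‖² dΠ. -/
def W2sq {m : ℕ} (Q₁ Q₂ : Measure (Vec m)) : ℝ≥0∞ :=
  ⨅ P ∈ {P : Measure (Vec m × Vec m) |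
      IsProbabilityMeasure P ∧ P.fst = Q₁ ∧ P.snd = Q₂},
    ∫⁻ z, ENNReal.ofReal (‖z.1 - z.2‖ ^ 2) ∂P

/-- 2-Wasserstein ball of radius ε ≥ 0 around Phat, inside M(Ξ):
d_{W₂}(Phat, Q) ≤ ε, equivalently d_{W₂}(Phat, Q)² ≤ ε². -/
def WassBall {m : ℕ} (Ξ : Set (Vec m)) (Phat : Measure (Vec m)) (ε : ℝ) :
    Set (Measure (Vec m)) :=
  {Q ∈ MXi Ξ | W2sq Phat Q ≤ ENNReal.ofReal (ε ^ 2)}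

/-!
For a fixed decision `x` the identity is strong duality for the worst-case expectation of
`g = f x` over the Wasserstein ball; the two infima on the right then commute.

Weak duality: if `s k` bounds `g ξ - λ ‖ξ - ξ̂ᵏ‖²` on `Ξ`, then `g ξ₂ ≤ s k + λ ‖ξ̂ᵏ - ξ₂‖²` can
be integrated against a coupling of `P̂_N` and `Q` of cost at most `ε² + δ`.

Strong duality: moving each sample `ξ̂ᵏ` to some `ζᵏ ∈ Ξ` gives a point
(mean transport cost, mean value of `g`) of the plane, and every convex combination of such
points with cost `≤ ε²` is realized by a finitely supported distribution in the ball, so its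
value is at most the primal value `v`. Separating the convex hull from the quadrant
`{cost < ε², value > v}`, with the Slater point `ζ = ξ̂` of cost `0`, yields a multiplier `λ`
with `mean (g ζᵏ - λ ‖ζᵏ - ξ̂ᵏ‖²) ≤ v - λ ε²` for all `ζ`, and taking suprema coordinatewise
bounds the dual objective at `λ` by `v`.
-/

lemma EReal.coe_finsetSum {ι : Type*} (s : Finset ι) (f : ι → ℝ) :
    ((∑ i ∈ s, f i : ℝ) : EReal) = ∑ i ∈ s, (f i : EReal) :=
  map_sum (⟨⟨(↑), EReal.coe_zero⟩, EReal.coe_add⟩ : ℝ →+ EReal) f s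

lemma EReal.sum_biSup_le_of_forall_sum_le {ι β : Type*} [Nonempty β] (s : Finset ι)
    (φ : ι → β → ℝ) (Ξ : Set β) {B : ℝ}
    (h : ∀ ζ : ι → β, (∀ k ∈ s, ζ k ∈ Ξ) → ∑ k ∈ s, φ k (ζ k) ≤ B) :
    ∑ k ∈ s, ⨆ ξ ∈ Ξ, (φ k ξ : EReal) ≤ B := by
  classical
  induction s using Finset.induction generalizing B with
  | empty => simpa using h (fun _ => Classical.arbitrary _) (by simp)
  | @insert j s hj ih =>
    rw [Finset.sum_insert hj]
    refine EReal.add_le_of_forall_lt fun a ha b hb => ?_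
    obtain ⟨ξ, hξ, haξ⟩ := lt_biSup_iff.1 ha
    have hrest : ∑ k ∈ s, ⨆ ξ ∈ Ξ, (φ k ξ : EReal) ≤ ((B - φ j ξ : ℝ) : EReal) := by
      refine ih fun ζ hζ => ?_
      have hupdate := h (Function.update ζ j ξ) fun k hk => by
        rcases Finset.mem_insert.1 hk with rfl | hk
        · simpa using hξ
        · simpa [Function.update_of_ne (ne_of_mem_of_not_mem hk hj)] using hζ k hk
      rw [Finset.sum_insert hj, Function.update_self,
        Finset.sum_congr rfl fun k hk => by
          rw [Function.update_of_ne (ne_of_mem_of_not_mem hk hj)]] at hupdate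
      linarith
    calc a + b ≤ (φ j ξ : EReal) + ((B - φ j ξ : ℝ) : EReal) :=
          add_le_add haξ.le (hb.le.trans hrest)
      _ = B := by rw [← EReal.coe_add, add_sub_cancel]

section Integral

variable {α : Type*} [MeasurableSpace α] {μ : Measure α}

lemma coe_lintegral_ofReal_sub_eq_integral {h : α → ℝ} (hh : Integrable h μ) :
    ((∫⁻ a, ENNReal.ofReal (h a) ∂μ : ℝ≥0∞) : EReal)
      - ((∫⁻ a, ENNReal.ofReal (-h a) ∂μ : ℝ≥0∞) : EReal) = ((∫ a, h a ∂μ : ℝ) : EReal) := by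
  have hneg : ∫⁻ a, ENNReal.ofReal (-h a) ∂μ ≠ ∞ := hh.neg.lintegral_lt_top.ne
  rw [integral_eq_lintegral_pos_part_sub_lintegral_neg_part hh, EReal.coe_sub,
    EReal.coe_ennreal_toReal hh.lintegral_lt_top.ne, EReal.coe_ennreal_toReal hneg]

lemma coe_lintegral_ofReal_sub_mono {g h : α → ℝ} (hgh : g ≤ᵐ[μ] h) :
    ((∫⁻ a, ENNReal.ofReal (g a) ∂μ : ℝ≥0∞) : EReal)
        - ((∫⁻ a, ENNReal.ofReal (-g a) ∂μ : ℝ≥0∞) : EReal)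
      ≤ ((∫⁻ a, ENNReal.ofReal (h a) ∂μ : ℝ≥0∞) : EReal)
        - ((∫⁻ a, ENNReal.ofReal (-h a) ∂μ : ℝ≥0∞) : EReal) :=
  EReal.sub_le_sub
    (EReal.coe_ennreal_le_coe_ennreal_iff.2 <| lintegral_mono_ae <|
      hgh.mono fun _ ha => ENNReal.ofReal_le_ofReal ha)
    (EReal.coe_ennreal_le_coe_ennreal_iff.2 <| lintegral_mono_ae <|
      hgh.mono fun _ ha => ENNReal.ofReal_le_ofReal (neg_le_neg ha))

end Integral

section DiracMix

variable {α ι : Type*} [MeasurableSpace α] [MeasurableSingletonClass α]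

/-- Negative weights are truncated to `0` by `ENNReal.ofReal`. -/
def diracMix (s : Finset ι) (w : ι → ℝ) (p : ι → α) : Measure α :=
  ∑ i ∈ s, ENNReal.ofReal (w i) • Measure.dirac (p i)

variable (s : Finset ι) (w : ι → ℝ) (p : ι → α)

lemma diracMix_apply (E : Set α) :
    diracMix s w p E = ∑ i ∈ s, ENNReal.ofReal (w i) * E.indicator 1 (p i) := by
  simp [diracMix, Measure.coe_finsetSum, Measure.dirac_apply]

lemma lintegral_diracMix (f : α → ℝ≥0∞) :
    ∫⁻ a, f a ∂(diracMix s w p) = ∑ i ∈ s, ENNReal.ofReal (w i) * f (p i) := by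
  simp [diracMix, lintegral_smul_measure]

lemma integrable_diracMix (f : α → ℝ) : Integrable f (diracMix s w p) :=
  integrable_finsetSum_measure.2 fun _ _ =>
    (integrable_dirac enorm_lt_top).smul_measure ENNReal.ofReal_ne_top

lemma integral_diracMix {s : Finset ι} {w : ι → ℝ} (hw : ∀ i ∈ s, 0 ≤ w i) (p : ι → α)
    (f : α → ℝ) : ∫ a, f a ∂(diracMix s w p) = ∑ i ∈ s, w i * f (p i) := by
  rw [diracMix, integral_finsetSum_measure fun i _ =>
    (integrable_dirac enorm_lt_top).smul_measure ENNReal.ofReal_ne_top]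
  refine Finset.sum_congr rfl fun i hi => ?_
  rw [integral_smul_measure, integral_dirac, ENNReal.toReal_ofReal (hw i hi), smul_eq_mul]

lemma isProbabilityMeasure_diracMix {s : Finset ι} {w : ι → ℝ} (hw0 : ∀ i ∈ s, 0 ≤ w i)
    (hw1 : ∑ i ∈ s, w i = 1) (p : ι → α) : IsProbabilityMeasure (diracMix s w p) := by
  constructor
  simp [diracMix_apply, ← ENNReal.ofReal_sum_of_nonneg hw0, hw1]

lemma diracMix_eq_zero_of_forall_notMem {E : Set α} (hE : ∀ i ∈ s, p i ∉ E) :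
    diracMix s w p E = 0 := by
  rw [diracMix_apply]
  exact Finset.sum_eq_zero fun i hi => by simp [Set.indicator_of_notMem (hE i hi)]

lemma map_diracMix {β : Type*} [MeasurableSpace β] [MeasurableSingletonClass β] {φ : α → β}
    (hφ : Measurable φ) :
    (diracMix s w p).map φ = diracMix s w (φ ∘ p) := by
  ext E hE
  rw [Measure.map_apply hφ hE, diracMix_apply, diracMix_apply]
  rfl

end DiracMix

lemma diracMix_product_eq {α ι κ : Type*} [MeasurableSpace α] [MeasurableSingletonClass α]
    {t : Finset ι} {w : ι → ℝ} (hw0 : ∀ i ∈ t, 0 ≤ w i) (hw1 : ∑ i ∈ t, w i = 1)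
    {s : Finset κ} {v : κ → ℝ} (hv : ∀ k ∈ s, 0 ≤ v k) (p : κ → α) :
    diracMix (t ×ˢ s) (fun ik => w ik.1 * v ik.2) (fun ik => p ik.2) = diracMix s v p := by
  ext E _
  simp only [diracMix_apply, Finset.sum_product]
  rw [Finset.sum_comm]
  refine Finset.sum_congr rfl fun k hk => ?_
  rw [← Finset.sum_mul,
    ← ENNReal.ofReal_sum_of_nonneg fun i hi => mul_nonneg (hw0 i hi) (hv k hk),
    ← Finset.sum_mul, hw1, one_mul]

lemma nonpos_of_forall_pos_mul_lt {a K : ℝ} (h : ∀ t > 0, a * t < K) : a ≤ 0 := by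
  by_contra! ha
  have := h ((|K| + 1) / a) (by positivity)
  rw [mul_div_cancel₀ _ ha.ne'] at this
  linarith [le_abs_self K]

lemma nonpos_of_forall_pos_lt_mul {D M : ℝ} (h : ∀ t > 0, D < t * M) : D ≤ 0 := by
  have hlim : Filter.Tendsto (fun t : ℝ => t * M) (nhdsWithin 0 (Set.Ioi 0)) (nhds 0) := by
    simpa using ((Filter.tendsto_id (x := nhds (0 : ℝ))).mul_const M).mono_left
      nhdsWithin_le_nhds
  exact ge_of_tendsto hlim (eventually_nhdsWithin_of_forall fun t ht => (h t ht).le)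

/-- Lagrange duality in the plane, under the Slater point `(0, a₀)`: the multiplier is the slope
of a line separating `convexHull ℝ T` from the open quadrant `{c < e, a > v}`. -/
lemma exists_lagrange_multiplier {T : Set (ℝ × ℝ)} {e v a₀ : ℝ} (he : 0 < e) (h0 : (0, a₀) ∈ T)
    (hv : ∀ p ∈ convexHull ℝ T, p.1 ≤ e → p.2 ≤ v) :
    ∃ lam : ℝ, 0 ≤ lam ∧ ∀ p ∈ T, p.2 - lam * p.1 ≤ v - lam * e := by
  have hdisj : Disjoint (Set.Iio e ×ˢ Set.Ioi v) (convexHull ℝ T) :=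
    Set.disjoint_left.2 fun p ⟨h1, h2⟩ hp => (hv p hp h1.le).not_gt h2
  obtain ⟨f, u, hquadrant, hhull⟩ := geometric_hahn_banach_open
    ((convex_Iio e).prod (convex_Ioi v)) (isOpen_Iio.prod isOpen_Ioi) (convex_convexHull ℝ T) hdisj
  set α := f (1, 0)
  set β := f (0, 1)
  have hf : ∀ p : ℝ × ℝ, f p = α * p.1 + β * p.2 := fun p => by
    calc f p = f (p.1 • (1, 0) + p.2 • (0, 1)) := by congr 1; ext <;> simp
      _ = α * p.1 + β * p.2 := by rw [map_add, map_smul, map_smul, smul_eq_mul, smul_eq_mul,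
        mul_comm, mul_comm p.2]
  have hq : ∀ s t : ℝ, 0 < s → 0 < t → α * (e - s) + β * (v + t) < u := fun s t hs ht => by
    simpa [hf] using hquadrant (e - s, v + t) ⟨by simp [hs], by simp [ht]⟩
  have hα : 0 ≤ α := neg_nonpos.1 <| nonpos_of_forall_pos_mul_lt
    (K := u - α * e - β * (v + 1)) fun s hs => by linarith [hq s 1 hs one_pos]
  have hβ : β ≤ 0 := nonpos_of_forall_pos_mul_lt
    (K := u - α * (e - 1) - β * v) fun t ht => by linarith [hq 1 t one_pos ht]
  have hcorner : α * e + β * v ≤ u := by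
    have := nonpos_of_forall_pos_lt_mul (D := α * e + β * v - u) (M := α - β)
      fun t ht => by linarith [hq t t ht ht]
    linarith
  have hβ_neg : β < 0 := by
    refine hβ.lt_of_ne fun hβ0 => ?_
    have h1 := hhull _ (subset_convexHull ℝ T h0)
    have h2 := hq (e / 2) 1 (half_pos he) one_pos
    rw [hf, hβ0] at h1
    rw [hβ0] at h2
    simp only [mul_zero, add_zero, zero_mul] at h1 h2
    nlinarith
  refine ⟨α / -β, div_nonneg hα (neg_nonneg.2 hβ), fun p hp => ?_⟩
  have hp := hhull p (subset_convexHull ℝ T hp)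
  rw [hf] at hp
  have : α / -β * (e - p.1) ≤ v - p.2 := by
    rw [div_mul_eq_mul_div, div_le_iff₀ (neg_pos.2 hβ_neg)]
    linarith
  linarith

section Wasserstein

variable {m N : ℕ} {Ξ : Set (Vec m)} {g : Vec m → ℝ} {lam : ℝ}

def empiricalMeasure (ξhat : Fin N → Vec m) : Measure (Vec m) :=
  (N : ℝ≥0∞)⁻¹ • ∑ k : Fin N, Measure.dirac (ξhat k)

lemma empiricalMeasure_eq_diracMix (ξhat : Fin N → Vec m) :
    empiricalMeasure ξhat = diracMix Finset.univ (fun _ => 1 / (N : ℝ)) ξhat := by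
  rw [empiricalMeasure, diracMix, Finset.smul_sum]
  refine Finset.sum_congr rfl fun k _ => ?_
  rw [one_div, ENNReal.ofReal_inv_of_pos (Nat.cast_pos.2 k.pos), ENNReal.ofReal_natCast]

lemma expectEReal_eq_integral {Q : Measure (Vec m)} (hg : Integrable g Q) :
    expectEReal Q g = ((∫ ξ, g ξ ∂Q : ℝ) : EReal) :=
  coe_lintegral_ofReal_sub_eq_integral hg

lemma diracMix_mem_wassBall {ι : Type*} {P : Measure (Vec m)} {ε : ℝ}
    {s : Finset ι} {w : ι → ℝ} (hw0 : ∀ i ∈ s, 0 ≤ w i) (hw1 : ∑ i ∈ s, w i = 1)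
    {η ζ : ι → Vec m} (hζ : ∀ i ∈ s, ζ i ∈ Ξ) (hη : diracMix s w η = P)
    (hcost : ∑ i ∈ s, w i * ‖η i - ζ i‖ ^ 2 ≤ ε ^ 2) :
    diracMix s w ζ ∈ WassBall Ξ P ε := by
  refine ⟨⟨isProbabilityMeasure_diracMix hw0 hw1 ζ,
    diracMix_eq_zero_of_forall_notMem s w ζ fun i hi hiΞ => hiΞ (hζ i hi), ?_⟩, ?_⟩
  · rw [lintegral_diracMix]
    exact ENNReal.sum_lt_top.2 fun _ _ => ENNReal.mul_lt_top ENNReal.ofReal_lt_top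
      ENNReal.ofReal_lt_top
  · have hfst : (diracMix s w fun i => (η i, ζ i)).fst = P := by
      rw [Measure.fst, map_diracMix s w _ measurable_fst, ← hη]
      rfl
    have hsnd : (diracMix s w fun i => (η i, ζ i)).snd = diracMix s w ζ := by
      rw [Measure.snd, map_diracMix s w _ measurable_snd]
      rfl
    refine iInf₂_le_of_le _ ⟨isProbabilityMeasure_diracMix hw0 hw1 _, hfst, hsnd⟩ ?_
    rw [← ofReal_integral_eq_lintegral_ofReal (integrable_diracMix s w _ _)
      (ae_of_all _ fun _ => sq_nonneg _), integral_diracMix hw0]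
    exact ENNReal.ofReal_le_ofReal hcost

def penalizedSup (Ξ : Set (Vec m)) (g : Vec m → ℝ) (lam : ℝ) (v : Vec m) : EReal :=
  ⨆ ξ ∈ Ξ, ((g ξ - lam * ‖ξ - v‖ ^ 2 : ℝ) : EReal)

def dualObjective (Ξ : Set (Vec m)) (ξhat : Fin N → Vec m) (ε : ℝ) (g : Vec m → ℝ)
    (lam : ℝ) : EReal :=
  ((lam * ε ^ 2 : ℝ) : EReal)
    + ((1 / (N : ℝ) : ℝ) : EReal) * ∑ k : Fin N, penalizedSup Ξ g lam (ξhat k)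

lemma coe_le_penalizedSup {v : Vec m} (hv : v ∈ Ξ) : (g v : EReal) ≤ penalizedSup Ξ g lam v :=
  le_iSup₂_of_le v hv (by simp)

lemma le_penalizedSup {v ξ : Vec m} (hξ : ξ ∈ Ξ) :
    ((g ξ - lam * ‖ξ - v‖ ^ 2 : ℝ) : EReal) ≤ penalizedSup Ξ g lam v :=
  le_iSup₂_of_le ξ hξ le_rfl

lemma dualObjective_eq_top {ξhat : Fin N → Vec m} (hξhat : ∀ k, ξhat k ∈ Ξ) (ε : ℝ)
    {k : Fin N} (hk : penalizedSup Ξ g lam (ξhat k) = ⊤) : dualObjective Ξ ξhat ε g lam = ⊤ := by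
  have hrest : ∑ j ∈ Finset.univ.erase k, penalizedSup Ξ g lam (ξhat j) ≠ ⊥ := by
    refine ne_bot_of_le_ne_bot (EReal.coe_ne_bot (∑ j ∈ Finset.univ.erase k, g (ξhat j))) ?_
    rw [EReal.coe_finsetSum]
    exact Finset.sum_le_sum fun j _ => coe_le_penalizedSup (hξhat j)
  have hN : (0 : ℝ) < 1 / N := one_div_pos.2 (Nat.cast_pos.2 k.pos)
  rw [dualObjective, ← Finset.add_sum_erase _ _ (Finset.mem_univ k), hk,
    EReal.top_add_of_ne_bot hrest, EReal.coe_mul_top_of_pos hN,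
    EReal.add_top_of_ne_bot (EReal.coe_ne_bot _)]

lemma dualObjective_eq_coe {ξhat : Fin N → Vec m} (hξhat : ∀ k, ξhat k ∈ Ξ) (ε : ℝ)
    (hfin : ∀ k, penalizedSup Ξ g lam (ξhat k) ≠ ⊤) :
    dualObjective Ξ ξhat ε g lam = ((lam * ε ^ 2
      + 1 / (N : ℝ) * ∑ k, (penalizedSup Ξ g lam (ξhat k)).toReal : ℝ) : EReal) := by
  have hcoe : ∀ k,
      penalizedSup Ξ g lam (ξhat k) = ((penalizedSup Ξ g lam (ξhat k)).toReal : EReal) :=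
    fun k => (EReal.coe_toReal (hfin k)
      (ne_bot_of_le_ne_bot (EReal.coe_ne_bot _) (coe_le_penalizedSup (hξhat k)))).symm
  rw [dualObjective, Finset.sum_congr rfl fun k _ => hcoe k, ← EReal.coe_finsetSum,
    ← EReal.coe_mul, ← EReal.coe_add]

lemma exists_coupling_of_W2sq_lt {P Q : Measure (Vec m)} {c : ℝ}
    (h : W2sq P Q < ENNReal.ofReal c) :
    ∃ π : Measure (Vec m × Vec m), π.fst = P ∧ π.snd = Q ∧
      Integrable (fun z => ‖z.1 - z.2‖ ^ 2) π ∧ ∫ z, ‖z.1 - z.2‖ ^ 2 ∂π < c := by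
  simp only [W2sq, iInf_lt_iff] at h
  obtain ⟨π, ⟨-, hfst, hsnd⟩, hcost⟩ := h
  have hmeas : AEStronglyMeasurable (fun z : Vec m × Vec m => ‖z.1 - z.2‖ ^ 2) π := by
    fun_prop
  have hnonneg : 0 ≤ᵐ[π] fun z : Vec m × Vec m => ‖z.1 - z.2‖ ^ 2 :=
    ae_of_all _ fun _ => sq_nonneg _
  refine ⟨π, hfst, hsnd, (lintegral_ofReal_ne_top_iff_integrable hmeas hnonneg).1
    (hcost.trans ENNReal.ofReal_lt_top).ne, ?_⟩
  rw [integral_eq_lintegral_of_nonneg_ae hnonneg hmeas]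
  exact ENNReal.toReal_lt_of_lt_ofReal hcost

lemma expectEReal_le_of_coupling {ξhat : Fin N → Vec m} {Q : Measure (Vec m)}
    {π : Measure (Vec m × Vec m)} (hfst : π.fst = empiricalMeasure ξhat) (hsnd : π.snd = Q)
    (hQ : Q Ξᶜ = 0) (hg : Measurable g)
    (hcost : Integrable (fun z : Vec m × Vec m => ‖z.1 - z.2‖ ^ 2) π) {u : Vec m → ℝ}
    (hu : ∀ k, ∀ ξ ∈ Ξ, g ξ - lam * ‖ξ - ξhat k‖ ^ 2 ≤ u (ξhat k)) :
    expectEReal Q g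
      ≤ ((1 / (N : ℝ) * ∑ k, u (ξhat k) + lam * ∫ z, ‖z.1 - z.2‖ ^ 2 ∂π : ℝ) : EReal) := by
  have hmap : π.map Prod.fst = diracMix Finset.univ (fun _ => 1 / (N : ℝ)) ξhat :=
    hfst.trans (empiricalMeasure_eq_diracMix ξhat)
  have hu_meas : AEStronglyMeasurable u (π.map Prod.fst) :=
    hmap ▸ (integrable_diracMix _ _ _ u).aestronglyMeasurable
  have hu_int : Integrable (fun z : Vec m × Vec m => u z.1) π :=
    (integrable_map_measure hu_meas measurable_fst.aemeasurable).1
      (hmap ▸ integrable_diracMix _ _ _ u)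
  have hu_integral : ∫ z, u z.1 ∂π = 1 / (N : ℝ) * ∑ k, u (ξhat k) := by
    rw [← integral_map measurable_fst.aemeasurable hu_meas, hmap,
      integral_diracMix (fun _ _ => by positivity), Finset.mul_sum]
  have hfst_ae : ∀ᵐ z ∂π, z.1 ∈ Set.range ξhat := by
    have : ∀ᵐ v ∂π.fst, v ∈ Set.range ξhat := by
      rw [Measure.fst, hmap]
      exact ae_iff.2 (diracMix_eq_zero_of_forall_notMem _ _ _ fun k _ hk => hk ⟨k, rfl⟩)
    exact ae_of_ae_map measurable_fst.aemeasurable this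
  have hsnd_ae : ∀ᵐ z ∂π, z.2 ∈ Ξ := by
    have : ∀ᵐ ξ ∂π.snd, ξ ∈ Ξ := hsnd ▸ ae_iff.2 hQ
    exact ae_of_ae_map measurable_snd.aemeasurable this
  have hbound : ∀ᵐ z ∂π, g z.2 ≤ u z.1 + lam * ‖z.1 - z.2‖ ^ 2 := by
    filter_upwards [hfst_ae, hsnd_ae] with z ⟨k, hk⟩ hz
    have := hu k z.2 hz
    rw [← hk, norm_sub_rev]
    linarith
  have hrhs_int := hu_int.add (hcost.const_mul lam)
  calc expectEReal Q g
      = ((∫⁻ z, ENNReal.ofReal (g z.2) ∂π : ℝ≥0∞) : EReal)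
          - ((∫⁻ z, ENNReal.ofReal (-g z.2) ∂π : ℝ≥0∞) : EReal) := by
        rw [← hsnd, expectEReal, Measure.snd, lintegral_map hg.ennreal_ofReal measurable_snd,
          lintegral_map (f := fun ξ => ENNReal.ofReal (-g ξ)) hg.neg.ennreal_ofReal
            measurable_snd]
    _ ≤ ((∫ z, (u z.1 + lam * ‖z.1 - z.2‖ ^ 2) ∂π : ℝ) : EReal) :=
        (coe_lintegral_ofReal_sub_mono hbound).trans_eq
          (coe_lintegral_ofReal_sub_eq_integral hrhs_int)
    _ = _ := by
        rw [integral_add hu_int (hcost.const_mul lam), integral_const_mul, hu_integral]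

lemma expectEReal_le_dualObjective {ξhat : Fin N → Vec m} (hξhat : ∀ k, ξhat k ∈ Ξ)
    (hg : Measurable g) {ε : ℝ} {Q : Measure (Vec m)}
    (hQ : Q ∈ WassBall Ξ (empiricalMeasure ξhat) ε) (hlam : 0 ≤ lam) :
    expectEReal Q g ≤ dualObjective Ξ ξhat ε g lam := by
  by_cases htop : ∃ k, penalizedSup Ξ g lam (ξhat k) = ⊤
  · obtain ⟨k, hk⟩ := htop
    rw [dualObjective_eq_top hξhat ε hk]
    exact le_top
  push Not at htop
  set u : Vec m → ℝ := fun v => (penalizedSup Ξ g lam v).toReal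
  have hu : ∀ k, ∀ ξ ∈ Ξ, g ξ - lam * ‖ξ - ξhat k‖ ^ 2 ≤ u (ξhat k) := fun k ξ hξ =>
    EReal.coe_le_coe_iff.1 <| (le_penalizedSup hξ).trans_eq (EReal.coe_toReal (htop k)
      (ne_bot_of_le_ne_bot (EReal.coe_ne_bot _) (coe_le_penalizedSup (hξhat k)))).symm
  rw [dualObjective_eq_coe hξhat ε htop]
  refine EReal.le_of_forall_lt_iff_le.1 fun z hz => ?_
  rw [EReal.coe_lt_coe_iff] at hz
  -- the slack `z - dual value` pays for the suboptimality `δ` of the coupling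
  set δ := (z - (lam * ε ^ 2 + 1 / (N : ℝ) * ∑ k, u (ξhat k))) / (lam + 1) with hδ_def
  have hδ : 0 < δ := div_pos (by linarith) (by linarith)
  have hW : W2sq (empiricalMeasure ξhat) Q < ENNReal.ofReal (ε ^ 2 + δ) :=
    hQ.2.trans_lt ((ENNReal.ofReal_lt_ofReal_iff (by positivity)).2 (by linarith))
  obtain ⟨π, hfst, hsnd, hcost, hcost_lt⟩ := exists_coupling_of_W2sq_lt hW
  refine (expectEReal_le_of_coupling hfst hsnd hQ.1.2.1 hg hcost hu).trans
    (EReal.coe_le_coe_iff.2 ?_)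
  have hslack : (lam + 1) * δ = z - (lam * ε ^ 2 + 1 / (N : ℝ) * ∑ k, u (ξhat k)) := by
    rw [hδ_def]
    field_simp
  nlinarith [mul_le_mul_of_nonneg_left hcost_lt.le hlam]

def momentPair (ξhat : Fin N → Vec m) (g : Vec m → ℝ) (ζ : Fin N → Vec m) : ℝ × ℝ :=
  (1 / (N : ℝ) * ∑ k, ‖ξhat k - ζ k‖ ^ 2, 1 / (N : ℝ) * ∑ k, g (ζ k))

/-- A convex combination `∑ w i • momentPair ξhat g (ζ i)` is realized by the distribution
putting mass `w i / N` at each `ζ i k`, transported from `ξhat k`. -/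
lemma le_iSup_wassBall_of_mem_convexHull (hN : 0 < N) {ξhat : Fin N → Vec m} {ε : ℝ}
    {p : ℝ × ℝ} (hp : p ∈ convexHull ℝ (momentPair ξhat g '' Set.univ.pi fun _ => Ξ))
    (hpε : p.1 ≤ ε ^ 2) :
    (p.2 : EReal) ≤ ⨆ Q ∈ WassBall Ξ (empiricalMeasure ξhat) ε, expectEReal Q g := by
  classical
  rw [convexHull_eq] at hp
  obtain ⟨ι, t, w, z, hw0, hw1, hz, rfl⟩ := hp
  choose! ζ hζ hzζ using hz
  set W : ι × Fin N → ℝ := fun ik => w ik.1 * (1 / (N : ℝ))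
  have hW0 : ∀ ik ∈ t ×ˢ Finset.univ, 0 ≤ W ik := fun ik hik =>
    mul_nonneg (hw0 _ (Finset.mem_product.1 hik).1) (by positivity)
  have hmean : ∀ F : ι → Fin N → ℝ, ∑ ik ∈ t ×ˢ Finset.univ, W ik * F ik.1 ik.2
      = ∑ i ∈ t, w i * (1 / (N : ℝ) * ∑ k, F i k) := fun F => by
    rw [Finset.sum_product]
    refine Finset.sum_congr rfl fun i _ => ?_
    rw [Finset.mul_sum, Finset.mul_sum]
    exact Finset.sum_congr rfl fun k _ => by ring
  have hW1 : ∑ ik ∈ t ×ˢ Finset.univ, W ik = 1 := by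
    have hNR : (N : ℝ) ≠ 0 := Nat.cast_ne_zero.2 hN.ne'
    have h := hmean fun _ _ => 1
    simp only [mul_one, Finset.sum_const, Finset.card_univ, Fintype.card_fin, nsmul_eq_mul,
      one_div, inv_mul_cancel₀ hNR] at h
    rw [h, hw1]
  have hcenter := Finset.centerMass_eq_of_sum_1 t z hw1
  have hQ : diracMix (t ×ˢ Finset.univ) W (fun ik => ζ ik.1 ik.2)
      ∈ WassBall Ξ (empiricalMeasure ξhat) ε := by
    refine diracMix_mem_wassBall (η := fun ik => ξhat ik.2) hW0 hW1 (fun ik hik => ?_) ?_ ?_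
    · exact hζ ik.1 (Finset.mem_product.1 hik).1 ik.2 (Set.mem_univ _)
    · rw [empiricalMeasure_eq_diracMix]
      exact diracMix_product_eq (v := fun _ => 1 / (N : ℝ)) hw0 hw1 (fun _ _ => by positivity)
        ξhat
    · rw [hmean fun i k => ‖ξhat k - ζ i k‖ ^ 2]
      convert hpε using 1
      rw [hcenter, Prod.fst_sum]
      exact Finset.sum_congr rfl fun i hi => by rw [← hzζ i hi]; rfl
  refine le_iSup₂_of_le _ hQ (le_of_eq ?_)
  rw [expectEReal_eq_integral (integrable_diracMix _ _ _ g), integral_diracMix hW0,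
    hmean fun i k => g (ζ i k), hcenter, Prod.snd_sum]
  exact congrArg _ (Finset.sum_congr rfl fun i hi => by rw [← hzζ i hi]; rfl)

lemma iInf_dualObjective_le_iSup_wassBall (hN : 0 < N) {ξhat : Fin N → Vec m}
    (hξhat : ∀ k, ξhat k ∈ Ξ) {ε : ℝ} (hε : 0 < ε) :
    ⨅ lam ∈ {l : ℝ | 0 ≤ l}, dualObjective Ξ ξhat ε g lam
      ≤ ⨆ Q ∈ WassBall Ξ (empiricalMeasure ξhat) ε, expectEReal Q g := by
  set P := ⨆ Q ∈ WassBall Ξ (empiricalMeasure ξhat) ε, expectEReal Q g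
  have hNR : (0 : ℝ) < N := Nat.cast_pos.2 hN
  have hslater : ((0 : ℝ), 1 / (N : ℝ) * ∑ k, g (ξhat k))
      ∈ momentPair ξhat g '' Set.univ.pi fun _ => Ξ :=
    ⟨ξhat, fun k _ => hξhat k, by simp [momentPair]⟩
  have hP_ge := le_iSup_wassBall_of_mem_convexHull hN (subset_convexHull ℝ _ hslater)
    (by positivity)
  by_cases hP_top : P = ⊤
  · rw [hP_top]
    exact le_top
  obtain ⟨v, hv⟩ : ∃ v : ℝ, P = v :=
    ⟨P.toReal, (EReal.coe_toReal hP_top (ne_bot_of_le_ne_bot (EReal.coe_ne_bot _) hP_ge)).symm⟩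
  obtain ⟨lam, hlam, hsep⟩ := exists_lagrange_multiplier (pow_pos hε 2) hslater
    fun p hp hpε =>
      EReal.coe_le_coe_iff.1 ((le_iSup_wassBall_of_mem_convexHull hN hp hpε).trans_eq hv)
  have hsum : ∑ k, penalizedSup Ξ g lam (ξhat k) ≤ ((N * (v - lam * ε ^ 2) : ℝ) : EReal) := by
    refine EReal.sum_biSup_le_of_forall_sum_le _ (fun k ξ => g ξ - lam * ‖ξ - ξhat k‖ ^ 2) Ξ
      fun ζ hζ => ?_
    have h := hsep _ ⟨ζ, fun k _ => hζ k (Finset.mem_univ k), rfl⟩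
    simp only [momentPair] at h
    rw [Finset.sum_sub_distrib, ← Finset.mul_sum, ← div_le_iff₀' hNR]
    simp_rw [norm_sub_rev (ζ _) (ξhat _)]
    exact Eq.trans_le (by ring) h
  refine iInf₂_le_of_le lam hlam ?_
  calc dualObjective Ξ ξhat ε g lam
      ≤ ((lam * ε ^ 2 : ℝ) : EReal)
          + ((1 / (N : ℝ) : ℝ) : EReal) * ((N * (v - lam * ε ^ 2) : ℝ) : EReal) :=
        add_le_add le_rfl (mul_le_mul_of_nonneg_left hsum (EReal.coe_nonneg.2 (by positivity)))
    _ = P := by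
        rw [hv, ← EReal.coe_mul, ← EReal.coe_add]
        congr 1
        field_simp
        ring

lemma iSup_wassBall_eq_iInf_dualObjective (hN : 0 < N) {ξhat : Fin N → Vec m}
    (hξhat : ∀ k, ξhat k ∈ Ξ) {ε : ℝ} (hε : 0 < ε) (hg : Measurable g) :
    ⨆ Q ∈ WassBall Ξ (empiricalMeasure ξhat) ε, expectEReal Q g
      = ⨅ lam ∈ {l : ℝ | 0 ≤ l}, dualObjective Ξ ξhat ε g lam :=
  le_antisymm
    (iSup₂_le fun _ hQ => le_iInf₂ fun _ hlam => expectEReal_le_dualObjective hξhat hg hQ hlam)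
    (iInf_dualObjective_le_iSup_wassBall hN hξhat hε)

end Wasserstein

theorem wasserstein_dro_tractable_reformulation_general
    {n m N : ℕ} (hN : 0 < N)
    (f : Vec n → Vec m → ℝ) (hfcont : Continuous (Function.uncurry f))
    (X : Set (Vec n))
    (Ξ : Set (Vec m))
    (ξhat : Fin N → Vec m) (hξhat : ∀ k, ξhat k ∈ Ξ)
    (ε : ℝ) (hε : 0 < ε) :
    (⨅ x ∈ X,
        ⨆ Q ∈ WassBall Ξ ((N : ℝ≥0∞)⁻¹ • ∑ k : Fin N, Measure.dirac (ξhat k)) ε,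
          expectEReal Q (f x))
      = ⨅ lam ∈ {l : ℝ | 0 ≤ l}, ⨅ x ∈ X,
          ((lam * ε ^ 2 : ℝ) : EReal)
            + ((1 / (N : ℝ) : ℝ) : EReal) *
              ∑ k : Fin N, ⨆ ξ ∈ Ξ, ((f x ξ - lam * ‖ξ - ξhat k‖ ^ 2 : ℝ) : EReal) := by
  have hduality (x : Vec n) := iSup_wassBall_eq_iInf_dualObjective (g := f x) hN hξhat hε
    (hfcont.comp (Continuous.prodMk_right x)).measurable
  simp only [empiricalMeasure, dualObjective, penalizedSup] at hduality
  simp only [hduality]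
  exact iInf₂_comm _

/-- tractable reformulation of the data-driven distributionally robust
optimization problem over a 2-Wasserstein ambiguity ball centered at the empirical
distribution P̂_N = (1/N) Σ_k δ_{ξ̂ᵏ}, in the extended reals. -/
theorem wasserstein_dro_tractable_reformulation
    {n m N : ℕ} (hN : 0 < N)
    (f : Vec n → Vec m → ℝ) (hfcont : Continuous (Function.uncurry f))
    (X : Set (Vec n)) (hXclosed : IsClosed X) (hXconv : Convex ℝ X)
    (Ξ : Set (Vec m)) (hΞclosed : IsClosed Ξ) (hΞconv : Convex ℝ Ξ)
    (hconv : ∀ ξ ∈ Ξ, ConvexOn ℝ Set.univ (fun x => f x ξ))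
    (ξhat : Fin N → Vec m) (hξhat : ∀ k, ξhat k ∈ Ξ)
    (ε : ℝ) (hε : 0 < ε) :
    (⨅ x ∈ X,
        ⨆ Q ∈ WassBall Ξ ((N : ℝ≥0∞)⁻¹ • ∑ k : Fin N, Measure.dirac (ξhat k)) ε,
          expectEReal Q (f x))
      = ⨅ lam ∈ {l : ℝ | 0 ≤ l}, ⨅ x ∈ X,
          ((lam * ε ^ 2 : ℝ) : EReal)
            + ((1 / (N : ℝ) : ℝ) : EReal) *
              ∑ k : Fin N, ⨆ ξ ∈ Ξ, ((f x ξ - lam * ‖ξ - ξhat k‖ ^ 2 : ℝ) : EReal) :=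
  wasserstein_dro_tractable_reformulation_general hN f hfcont X Ξ ξhat hξhat ε hε

end
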